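/- Let p > 2 be a real number. There exists a constant C = C(p) > 0 such that for all x, y ∈ ℝⁿ, | |x+y|^{p-2}(x+y) − |x|^{p-2}x − |y|^{p-2}y | ≤ C(|x|^{p-2}|y| + |x| |y|^{p-2}), where the left-hand side is the Euclidean norm of the vector difference. -/

import Mathlib

/-!
Write `q = p - 2` and split the vector as `(‖x + y‖^q - ‖x‖^q) • x + (‖x + y‖^q - ‖y‖^q) • y`.
Each coefficient is a difference of `q`-th powers of two numbers at distance at most the norm of
the other vector: for `q ≤ 1` it is bounded by Hölder continuity of `u ↦ u^q`, for `q ≥ 1` by the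
tangent-line (convexity) estimate `a^q - b^q ≤ q a^(q-1) (a - b)`.
-/

namespace Real

lemma rpow_sub_rpow_le_mul_sub {q a b : ℝ} (hq : 1 ≤ q) (hb : 0 ≤ b) (hba : b ≤ a) :
    a ^ q - b ^ q ≤ q * a ^ (q - 1) * (a - b) := by
  rcases hba.eq_or_lt with rfl | hba
  · simp
  have hslope := (convexOn_rpow hq).slope_le_of_hasDerivAt (Set.mem_Ici.2 hb)
    (Set.mem_Ici.2 (hb.trans hba.le)) hba (hasDerivAt_rpow_const (Or.inr hq))
  rwa [slope_def_field, div_le_iff₀ (sub_pos.2 hba)] at hslope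

lemma abs_rpow_sub_rpow_le_mul_abs_sub {q s t : ℝ} (hq : 1 ≤ q) (hs : 0 ≤ s) (ht : 0 ≤ t) :
    |s ^ q - t ^ q| ≤ q * max s t ^ (q - 1) * |s - t| := by
  wlog hts : t ≤ s generalizing s t
  · rw [abs_sub_comm, abs_sub_comm s, max_comm]
    exact this ht hs (le_of_not_ge hts)
  have hmono : t ^ q ≤ s ^ q := rpow_le_rpow ht hts (by linarith)
  rw [abs_of_nonneg (sub_nonneg.2 hmono), abs_of_nonneg (sub_nonneg.2 hts), max_eq_left hts]
  exact rpow_sub_rpow_le_mul_sub hq ht hts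

lemma abs_rpow_sub_rpow_le_abs_sub_rpow {q s t : ℝ} (hq₀ : 0 ≤ q) (hq₁ : q ≤ 1) (hs : 0 ≤ s)
    (ht : 0 ≤ t) : |s ^ q - t ^ q| ≤ |s - t| ^ q := by
  wlog hts : t ≤ s generalizing s t
  · rw [abs_sub_comm, abs_sub_comm s]
    exact this ht hs (le_of_not_ge hts)
  have hmono : t ^ q ≤ s ^ q := rpow_le_rpow ht hts hq₀
  have hsub := rpow_add_le_add_rpow ht (sub_nonneg.2 hts) hq₀ hq₁
  rw [add_sub_cancel] at hsub
  rw [abs_of_nonneg (sub_nonneg.2 hmono), abs_of_nonneg (sub_nonneg.2 hts)]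
  linarith

lemma max_rpow_sub_one_mul_mul_le {q t d : ℝ} (hq : 0 < q) (ht : 0 ≤ t) (hd : 0 ≤ d) :
    max t d ^ (q - 1) * d * t ≤ d ^ q * t + d * t ^ q := by
  have hpow : ∀ u : ℝ, 0 ≤ u → u ^ (q - 1) * u = u ^ q := fun u hu => by
    rw [← rpow_add_one' hu (by linarith), sub_add_cancel]
  rcases le_total t d with htd | hdt
  · rw [max_eq_right htd, hpow d hd]
    nlinarith [rpow_nonneg ht q]
  · rw [max_eq_left hdt, mul_assoc, mul_comm d, ← mul_assoc, hpow t ht]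
    nlinarith [rpow_nonneg hd q]

lemma abs_rpow_sub_rpow_mul_le {q s t d : ℝ} (hq : 0 ≤ q) (hs : 0 ≤ s) (ht : 0 ≤ t) (hd : 0 ≤ d)
    (hstd : |s - t| ≤ d) :
    |s ^ q - t ^ q| * t ≤ (q * 2 ^ (q - 1) + 1) * (d ^ q * t + d * t ^ q) := by
  have hrhs : 0 ≤ d ^ q * t + d * t ^ q := by positivity
  have hK : 0 ≤ q * 2 ^ (q - 1) := by positivity
  rcases le_total q 1 with hq₁ | hq₁
  · have hdiff : |s ^ q - t ^ q| ≤ d ^ q :=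
      (abs_rpow_sub_rpow_le_abs_sub_rpow hq hq₁ hs ht).trans
        (rpow_le_rpow (abs_nonneg _) hstd hq)
    nlinarith [rpow_nonneg hd q, mul_nonneg hd (rpow_nonneg ht q)]
  · have hmax : max s t ≤ 2 * max t d := by
      have hst : s - t ≤ d := (abs_le.1 hstd).2
      refine max_le ?_ ?_ <;> linarith [le_max_left t d, le_max_right t d]
    have hdiff : |s ^ q - t ^ q| ≤ q * 2 ^ (q - 1) * max t d ^ (q - 1) * d := by
      calc |s ^ q - t ^ q| ≤ q * max s t ^ (q - 1) * |s - t| :=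
            abs_rpow_sub_rpow_le_mul_abs_sub hq₁ hs ht
        _ ≤ q * (2 * max t d) ^ (q - 1) * d := by gcongr
        _ = q * 2 ^ (q - 1) * max t d ^ (q - 1) * d := by
            rw [mul_rpow zero_le_two (le_max_of_le_left ht)]; ring
    calc |s ^ q - t ^ q| * t ≤ q * 2 ^ (q - 1) * (max t d ^ (q - 1) * d * t) := by
          nlinarith
      _ ≤ q * 2 ^ (q - 1) * (d ^ q * t + d * t ^ q) :=
          mul_le_mul_of_nonneg_left (max_rpow_sub_one_mul_mul_le (by linarith) ht hd) hK
      _ ≤ (q * 2 ^ (q - 1) + 1) * (d ^ q * t + d * t ^ q) := by nlinarith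

end Real

theorem norm_rpow_smul_add_sub_le {E : Type*} [NormedAddCommGroup E] [NormedSpace ℝ E] {q : ℝ}
    (hq : 0 ≤ q) (x y : E) :
    ‖‖x + y‖ ^ q • (x + y) - ‖x‖ ^ q • x - ‖y‖ ^ q • y‖ ≤
      2 * (q * 2 ^ (q - 1) + 1) * (‖x‖ ^ q * ‖y‖ + ‖x‖ * ‖y‖ ^ q) := by
  have hsplit : ‖x + y‖ ^ q • (x + y) - ‖x‖ ^ q • x - ‖y‖ ^ q • y =
      (‖x + y‖ ^ q - ‖x‖ ^ q) • x + (‖x + y‖ ^ q - ‖y‖ ^ q) • y := by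
    rw [smul_add, sub_smul, sub_smul]; abel
  have hx := Real.abs_rpow_sub_rpow_mul_le hq (norm_nonneg (x + y)) (norm_nonneg x)
    (norm_nonneg y) (by simpa using abs_norm_sub_norm_le (x + y) x)
  have hy := Real.abs_rpow_sub_rpow_mul_le hq (norm_nonneg (x + y)) (norm_nonneg y)
    (norm_nonneg x) (by simpa using abs_norm_sub_norm_le (x + y) y)
  calc _ ≤ ‖(‖x + y‖ ^ q - ‖x‖ ^ q) • x‖ + ‖(‖x + y‖ ^ q - ‖y‖ ^ q) • y‖ := by
        rw [hsplit]; exact norm_add_le _ _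
    _ = |‖x + y‖ ^ q - ‖x‖ ^ q| * ‖x‖ + |‖x + y‖ ^ q - ‖y‖ ^ q| * ‖y‖ := by
        rw [norm_smul, norm_smul, Real.norm_eq_abs, Real.norm_eq_abs]
    _ ≤ _ := by linarith

theorem stmt_8_general (n : ℕ) (p : ℝ) (hp : 2 < p) :
    ∃ C : ℝ, 0 < C ∧ ∀ x y : EuclideanSpace ℝ (Fin n),
      ‖(‖x + y‖ ^ (p - 2)) • (x + y) - (‖x‖ ^ (p - 2)) • x - (‖y‖ ^ (p - 2)) • y‖ ≤
        C * (‖x‖ ^ (p - 2) * ‖y‖ + ‖x‖ * ‖y‖ ^ (p - 2)) := by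
  have hq : 0 ≤ p - 2 := by linarith
  exact ⟨_, by positivity, norm_rpow_smul_add_sub_le hq⟩

theorem stmt_8 (n : ℕ) (hn : 1 ≤ n) (p : ℝ) (hp : 2 < p) :
    ∃ C : ℝ, 0 < C ∧ ∀ x y : EuclideanSpace ℝ (Fin n),
      ‖(‖x + y‖ ^ (p - 2)) • (x + y) - (‖x‖ ^ (p - 2)) • x - (‖y‖ ^ (p - 2)) • y‖ ≤
        C * (‖x‖ ^ (p - 2) * ‖y‖ + ‖x‖ * ‖y‖ ^ (p - 2)) :=
  stmt_8_general n p hp
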